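/- arXiv:1711.07544 — 2 statements merged into one kernel-verified Lean document; each statement's English description precedes it below -/
import Mathlib

section
/- Let G : ℝ^m → ℝ^p, m ≥ p > 0, be a continuously differentiable map with G(0)=0. Suppose there exists ρ₀>0 such that (i) every x with ‖x‖ ≤ ρ₀, G(x)=0 and DG(x) not surjective satisfies x = 0 (i.e. Sing G ∩ G⁻¹(0) = {0} as germs), and (ii) for every δ>0 there exists x ≠ 0 with ‖x‖ < δ and G(x)=0. Then G is nice: for every ε ∈ (0,ρ₀) the image G(B_ε) is a neighbourhood of 0 in ℝ^p, and for all ε, ε' ∈ (0,ρ₀) there exists δ>0 such that G(B_ε ∩ Sing G) ∩ B_δ = G(B_{ε'} ∩ Sing G) ∩ B_δ. -/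
/-!
Near a regular point the map is open by the inverse function theorem, and the zeros of `G`
accumulating at `0` are regular points inside any small ball, so `G '' B_ε` is a neighbourhood of
`0`. Surjective linear maps form an open set, so `Sing G` is closed; on the compact shell
`(closedBall 0 ε' \ B_ε) ∩ Sing G` the map `G` does not vanish, so its image misses a ball
`B_δ`, and inside `B_δ` the images of `B_ε ∩ Sing G` and `B_ε' ∩ Sing G` agree.
-/

open Metric Set Function

noncomputable section

/-- The singular set of `G`: points where the derivative is not surjective. -/
def singSet {m p : ℕ} (G : EuclideanSpace ℝ (Fin m) → EuclideanSpace ℝ (Fin p)) :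
    Set (EuclideanSpace ℝ (Fin m)) :=
  {x | ¬ Function.Surjective (fderiv ℝ G x)}

theorem ContinuousLinearMap.isOpen_setOf_surjective {𝕜 E F : Type*} [NontriviallyNormedField 𝕜]
    [CompleteSpace 𝕜] [NormedAddCommGroup E] [NormedSpace 𝕜 E] [NormedAddCommGroup F]
    [NormedSpace 𝕜 F] [FiniteDimensional 𝕜 F] :
    IsOpen {T : E →L[𝕜] F | Surjective T} := by
  have := FiniteDimensional.complete 𝕜 F
  refine isOpen_iff_forall_mem_open.mpr fun T hT => ?_
  obtain ⟨R, hR⟩ := T.exists_rightInverse_of_surjective (LinearMap.range_eq_top.mpr hT)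
  -- A perturbation `S` of `T` keeps `S ∘ R` invertible, so `R` still yields preimages.
  refine ⟨(fun S : E →L[𝕜] F => S.comp R) ⁻¹' {U | IsUnit U}, ?_,
    Units.isOpen.preimage (continuous_id.clm_comp continuous_const), ?_⟩
  · rintro S ⟨u, hu : (u : F →L[𝕜] F) = S.comp R⟩ y
    refine ⟨R ((↑u⁻¹ : F →L[𝕜] F) y), ?_⟩
    change S.comp R ((↑u⁻¹ : F →L[𝕜] F) y) = y
    rw [← hu, ← mul_apply_eq_comp, Units.mul_inv, one_apply_eq_self]
  · change IsUnit (T.comp R)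
    rw [hR]
    exact isUnit_one

theorem isClosed_singSet {m p : ℕ} {G : EuclideanSpace ℝ (Fin m) → EuclideanSpace ℝ (Fin p)}
    (hG : ContDiff ℝ 1 G) : IsClosed (singSet G) :=
  ContinuousLinearMap.isOpen_setOf_surjective.isClosed_compl.preimage
    (hG.continuous_fderiv one_ne_zero)

theorem ContDiffAt.image_mem_nhds_of_surjective_fderiv {E F : Type*} [NormedAddCommGroup E]
    [NormedSpace ℝ E] [CompleteSpace E] [NormedAddCommGroup F] [NormedSpace ℝ F] [CompleteSpace F]
    {f : E → F} {x : E} (hf : ContDiffAt ℝ 1 f x) (hsurj : Surjective (fderiv ℝ f x))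
    {U : Set E} (hU : U ∈ nhds x) : f '' U ∈ nhds (f x) := by
  rw [← (hf.hasStrictFDerivAt one_ne_zero).map_nhds_eq_of_surj (LinearMap.range_eq_top.mpr hsurj)]
  exact Filter.image_mem_map hU

theorem Set.image_inter_eq_of_disjoint_image_diff {α β : Type*} {f : α → β} {A B : Set α}
    {V : Set β} (hAB : A ⊆ B) (hV : Disjoint (f '' (B \ A)) V) : f '' B ∩ V = f '' A ∩ V := by
  rw [← union_sdiff_cancel hAB, image_union, union_inter_distrib_right, hV.inter_eq, union_empty]

theorem exists_image_ball_inter_eq_near_zero {E F : Type*} [NormedAddCommGroup E] [ProperSpace E]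
    [NormedAddCommGroup F] {G : E → F} (hG : Continuous G) {S : Set E} (hS : IsClosed S)
    {ε ε' : ℝ} (hε : 0 < ε) (hεε' : ε ≤ ε') (hzero : ∀ x ∈ S, ‖x‖ ≤ ε' → G x = 0 → x = 0) :
    ∃ δ > 0, G '' (ball 0 ε ∩ S) ∩ ball 0 δ = G '' (ball 0 ε' ∩ S) ∩ ball 0 δ := by
  set K := (closedBall 0 ε' \ ball 0 ε) ∩ S
  have hK : IsCompact K := (isCompact_closedBall 0 ε').of_isClosed_subset
    ((isClosed_closedBall.sdiff isOpen_ball).inter hS) (inter_subset_left.trans sdiff_subset)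
  have h0 : (0 : F) ∉ G '' K := by
    rintro ⟨x, ⟨⟨hxε', hxε⟩, hxS⟩, hGx⟩
    rw [hzero x hxS (mem_closedBall_zero_iff.mp hxε') hGx] at hxε
    exact hxε (mem_ball_self hε)
  obtain ⟨δ, hδ, hball⟩ := Metric.isOpen_iff.mp (hK.image hG).isClosed.isOpen_compl 0 h0
  have hdiff : (ball 0 ε' ∩ S) \ (ball 0 ε ∩ S) ⊆ K := by
    rintro x ⟨⟨hxε', hxS⟩, hx⟩
    exact ⟨⟨ball_subset_closedBall hxε', fun hxε => hx ⟨hxε, hxS⟩⟩, hxS⟩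
  exact ⟨δ, hδ, (image_inter_eq_of_disjoint_image_diff (inter_subset_inter_left _
    (ball_subset_ball hεε')) ((subset_compl_iff_disjoint_left.mp hball).mono_left
    (image_mono hdiff))).symm⟩

theorem nice_of_isolated_singular_zero_general (m p : ℕ)
    (G : EuclideanSpace ℝ (Fin m) → EuclideanSpace ℝ (Fin p))
    (hG : ContDiff ℝ 1 G)
    (ρ₀ : ℝ)
    (hsing : ∀ x : EuclideanSpace ℝ (Fin m),
      ‖x‖ ≤ ρ₀ → G x = 0 → ¬ Function.Surjective (fderiv ℝ G x) → x = 0)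
    (hdim : ∀ δ > (0 : ℝ), ∃ x : EuclideanSpace ℝ (Fin m), x ≠ 0 ∧ ‖x‖ < δ ∧ G x = 0) :
    (∀ ε : ℝ, 0 < ε → ε < ρ₀ →
        G '' ball 0 ε ∈ nhds (0 : EuclideanSpace ℝ (Fin p))) ∧
    (∀ ε ε' : ℝ, 0 < ε → ε < ρ₀ → 0 < ε' → ε' < ρ₀ → ∃ δ > (0 : ℝ),
        G '' (ball 0 ε ∩ singSet G) ∩ ball 0 δ =
        G '' (ball 0 ε' ∩ singSet G) ∩ ball 0 δ) := by
  refine ⟨fun ε hε hερ => ?_, fun ε ε' hε hερ hε' hε'ρ => ?_⟩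
  · obtain ⟨x, hx0, hxε, hGx⟩ := hdim ε hε
    have hsurj : Surjective (fderiv ℝ G x) :=
      not_not.mp fun h => hx0 (hsing x (hxε.trans hερ).le hGx h)
    rw [← hGx]
    exact hG.contDiffAt.image_mem_nhds_of_surjective_fderiv hsurj
      (isOpen_ball.mem_nhds (mem_ball_zero_iff.mpr hxε))
  · have germ_eq {a b : ℝ} (ha : 0 < a) (hab : a ≤ b) (hb : b < ρ₀) :=
      exists_image_ball_inter_eq_near_zero hG.continuous (isClosed_singSet hG) ha hab
        fun x hxS hxb hGx => hsing x (hxb.trans hb.le) hGx hxS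
    rcases le_total ε ε' with h | h
    · exact germ_eq hε h hε'ρ
    · obtain ⟨δ, hδ, h_eq⟩ := germ_eq hε' h hερ
      exact ⟨δ, hδ, h_eq.symm⟩

theorem nice_of_isolated_singular_zero (m p : ℕ) (hmp : p ≤ m) (hp : 0 < p)
    (G : EuclideanSpace ℝ (Fin m) → EuclideanSpace ℝ (Fin p))
    (hG : ContDiff ℝ 1 G) (hG0 : G 0 = 0)
    (ρ₀ : ℝ) (hρ₀ : 0 < ρ₀)
    (hsing : ∀ x : EuclideanSpace ℝ (Fin m),
      ‖x‖ ≤ ρ₀ → G x = 0 → ¬ Function.Surjective (fderiv ℝ G x) → x = 0)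
    (hdim : ∀ δ > (0 : ℝ), ∃ x : EuclideanSpace ℝ (Fin m), x ≠ 0 ∧ ‖x‖ < δ ∧ G x = 0) :
    (∀ ε : ℝ, 0 < ε → ε < ρ₀ →
        G '' ball 0 ε ∈ nhds (0 : EuclideanSpace ℝ (Fin p))) ∧
    (∀ ε ε' : ℝ, 0 < ε → ε < ρ₀ → 0 < ε' → ε' < ρ₀ → ∃ δ > (0 : ℝ),
        G '' (ball 0 ε ∩ singSet G) ∩ ball 0 δ =
        G '' (ball 0 ε' ∩ singSet G) ∩ ball 0 δ) :=
  nice_of_isolated_singular_zero_general m p G hG ρ₀ hsing hdim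
end
end

section
/- Let G : ℝ^m → ℝ^p, m ≥ p > 0, be a continuously differentiable map with G(0)=0 satisfying condition (⋆): there exists ε₀>0 such that closure(M(G) \ G⁻¹(Disc G)) ∩ G⁻¹(0) ∩ B_{ε₀} ⊆ {0}. Then for every ε ∈ (0,ε₀) there exists η>0 such that every x with ‖x‖ = ε and G(x) ∈ B_η \ Disc G satisfies x ∉ M(G); that is, at such x the linear map v ↦ (DG(x)v, ⟨x,v⟩) is surjective, so the restriction of G to the sphere of radius ε is a submersion at every point of S_ε ∩ G⁻¹(B_η \ Disc G). -/
open Metric Set Function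

noncomputable section

/-- The discriminant of `G`. -/
def discSet {m p : ℕ} (G : EuclideanSpace ℝ (Fin m) → EuclideanSpace ℝ (Fin p)) :
    Set (EuclideanSpace ℝ (Fin p)) :=
  closure (G '' singSet G) ∪ (closure (range G) \ interior (range G))

/-- The Milnor set of `G`: points where `v ↦ (DG(x) v, ⟨x, v⟩)` is not surjective. -/
def milnorSet {m p : ℕ} (G : EuclideanSpace ℝ (Fin m) → EuclideanSpace ℝ (Fin p)) :
    Set (EuclideanSpace ℝ (Fin m)) :=
  {x | ¬ Function.Surjective
    (fun v : EuclideanSpace ℝ (Fin m) => (fderiv ℝ G x v, (inner ℝ x v : ℝ)))}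

/-!
Let `K` be the part of the sphere `S_ε` lying in the closure of `M(G) \ G⁻¹(Disc G)`. It is compact,
and since `ε < ε₀`, condition (⋆) says that `G` does not vanish on `K`. So the compact set `G(K)`
stays outside some ball `B_η`, while every point of `S_ε ∩ M(G)` mapped into `B_η \ Disc G` lies in `K`.
-/

theorem IsCompact.exists_ball_disjoint_image {X Y : Type*} [TopologicalSpace X] [MetricSpace Y]
    {K : Set X} (hK : IsCompact K) {f : X → Y} (hf : ContinuousOn f K) {y : Y}
    (hy : y ∉ f '' K) : ∃ η > (0 : ℝ), ∀ x ∈ K, f x ∉ ball y η := by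
  obtain ⟨η, hη, hball⟩ := isOpen_iff.mp (hK.image_of_continuousOn hf).isClosed.isOpen_compl y hy
  exact ⟨η, hη, fun x hx hfx => hball hfx (mem_image_of_mem f hx)⟩

theorem sphere_submersion_of_condition_star_general (m p : ℕ)
    (G : EuclideanSpace ℝ (Fin m) → EuclideanSpace ℝ (Fin p))
    (hG : ContDiff ℝ 1 G)
    (ε₀ : ℝ)
    (hstar : closure (milnorSet G \ G ⁻¹' discSet G) ∩ G ⁻¹' {0} ∩ ball 0 ε₀ ⊆ {0}) :
    ∀ ε : ℝ, 0 < ε → ε < ε₀ → ∃ η > (0 : ℝ),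
      ∀ x : EuclideanSpace ℝ (Fin m), ‖x‖ = ε →
        G x ∈ ball (0 : EuclideanSpace ℝ (Fin p)) η \ discSet G →
        x ∉ milnorSet G := by
  intro ε hε hεε₀
  set K := sphere 0 ε ∩ closure (milnorSet G \ G ⁻¹' discSet G)
  have hK : IsCompact K := (isCompact_sphere 0 ε).inter_right isClosed_closure
  have hzero : (0 : EuclideanSpace ℝ (Fin p)) ∉ G '' K := by
    rintro ⟨x, ⟨hxε, hxcl⟩, hGx⟩
    have hxball : x ∈ ball 0 ε₀ := by
      rw [mem_sphere_zero_iff_norm] at hxε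
      rwa [mem_ball_zero_iff, hxε]
    have hx0 : x = 0 := hstar ⟨⟨hxcl, hGx⟩, hxball⟩
    rw [hx0, mem_sphere_zero_iff_norm, norm_zero] at hxε
    exact hε.ne hxε
  obtain ⟨η, hη, hKη⟩ := hK.exists_ball_disjoint_image hG.continuous.continuousOn hzero
  refine ⟨η, hη, fun x hxε ⟨hGη, hdisc⟩ hM => hKη x ⟨?_, subset_closure ⟨hM, hdisc⟩⟩ hGη⟩
  rwa [mem_sphere_zero_iff_norm]

theorem sphere_submersion_of_condition_star (m p : ℕ) (hmp : p ≤ m) (hp : 0 < p)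
    (G : EuclideanSpace ℝ (Fin m) → EuclideanSpace ℝ (Fin p))
    (hG : ContDiff ℝ 1 G) (hG0 : G 0 = 0)
    (ε₀ : ℝ) (hε₀ : 0 < ε₀)
    (hstar : closure (milnorSet G \ G ⁻¹' discSet G) ∩ G ⁻¹' {0} ∩ ball 0 ε₀ ⊆ {0}) :
    ∀ ε : ℝ, 0 < ε → ε < ε₀ → ∃ η > (0 : ℝ),
      ∀ x : EuclideanSpace ℝ (Fin m), ‖x‖ = ε →
        G x ∈ ball (0 : EuclideanSpace ℝ (Fin p)) η \ discSet G →
        x ∉ milnorSet G :=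
  sphere_submersion_of_condition_star_general m p G hG ε₀ hstar
end
end
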